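/- arXiv:2202.09760 — 4 statements merged into one kernel-verified Lean document; each statement's English description precedes it below -/
import Mathlib

section
/- The strong-interaction limit of the Levy-Lieb functional is the SCE functional: lim_{λ→∞} (1/λ) F^λ[ρ] = V_ee^SCE[ρ], for any ρ ∈ 𝒟^N. -/
/-- **The strong-interaction limit of the Levy-Lieb functional is the SCE functional:**
`lim_{λ→∞} (1/λ) F^λ[ρ] = V_ee^SCE[ρ]` for any `N`-representable density `ρ ∈ 𝒟^N`.
Wavefunctions `W` and densities `D` are abstract; `T` is the nonnegative (and, being
real-valued, finite) kinetic energy, `Vee` the nonnegative interaction energy, `dens`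
the density map.  `F^λ[ρ] = inf {T[Ψ] + λ V_ee[Ψ] : dens Ψ = ρ}` and
`V_ee^SCE[ρ] = inf {V_ee[Ψ] : dens Ψ = ρ}`. -/
theorem strong_interaction_limit_levyLieb
    {W D : Type*} (T Vee : W → ℝ) (dens : W → D) (ρ : D)
    (hT : ∀ Ψ : W, 0 ≤ T Ψ) (hV : ∀ Ψ : W, 0 ≤ Vee Ψ)
    (hNrep : ∃ Ψ : W, dens Ψ = ρ) :
    Filter.Tendsto
      (fun lam : ℝ => (sInf {e : ℝ | ∃ Ψ : W, dens Ψ = ρ ∧ e = T Ψ + lam * Vee Ψ}) / lam)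
      Filter.atTop
      (nhds (sInf {e : ℝ | ∃ Ψ : W, dens Ψ = ρ ∧ e = Vee Ψ})) := by
  set Sv : Set ℝ := {e : ℝ | ∃ Ψ : W, dens Ψ = ρ ∧ e = Vee Ψ} with hSv
  set V : ℝ := sInf Sv with hVdef
  have hSvne : Sv.Nonempty := by
    obtain ⟨Ψ, hΨ⟩ := hNrep
    exact ⟨Vee Ψ, Ψ, hΨ, rfl⟩
  have hSvbdd : BddBelow Sv := by
    refine ⟨0, fun e he => ?_⟩
    obtain ⟨Ψ, _, rfl⟩ := he
    exact hV Ψ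
  have hVle : ∀ Ψ : W, dens Ψ = ρ → V ≤ Vee Ψ := fun Ψ hΨ =>
    csInf_le hSvbdd ⟨Ψ, hΨ, rfl⟩
  rw [Metric.tendsto_atTop]
  intro ε hε
  obtain ⟨v, hvS, hvlt⟩ := Real.lt_sInf_add_pos hSvne (half_pos hε)
  obtain ⟨Ψ₀, hΨ₀, rfl⟩ := hvS
  refine ⟨max 1 (2 * T Ψ₀ / ε), fun lam hlam => ?_⟩
  have hlam1 : (1 : ℝ) ≤ lam := le_trans (le_max_left _ _) hlam
  have hlampos : 0 < lam := lt_of_lt_of_le one_pos hlam1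
  set Sf : Set ℝ := {e : ℝ | ∃ Ψ : W, dens Ψ = ρ ∧ e = T Ψ + lam * Vee Ψ} with hSf
  have hSfne : Sf.Nonempty := ⟨T Ψ₀ + lam * Vee Ψ₀, Ψ₀, hΨ₀, rfl⟩
  have hSfbdd : BddBelow Sf := by
    refine ⟨0, fun e he => ?_⟩
    obtain ⟨Ψ, _, rfl⟩ := he
    have := mul_nonneg hlampos.le (hV Ψ)
    linarith [hT Ψ]
  -- lower bound
  have hlow : lam * V ≤ sInf Sf := by
    refine le_csInf hSfne fun e he => ?_
    obtain ⟨Ψ, hΨ, rfl⟩ := he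
    have h1 : lam * V ≤ lam * Vee Ψ := by
      exact mul_le_mul_of_nonneg_left (hVle Ψ hΨ) hlampos.le
    linarith [hT Ψ]
  have hlow' : V ≤ sInf Sf / lam := by
    rw [le_div_iff₀ hlampos]
    linarith [hlow]
  -- upper bound
  have hup : sInf Sf ≤ T Ψ₀ + lam * Vee Ψ₀ := csInf_le hSfbdd ⟨Ψ₀, hΨ₀, rfl⟩
  have hTdiv : T Ψ₀ / lam ≤ ε / 2 := by
    rw [div_le_iff₀ hlampos]
    have h2 : 2 * T Ψ₀ / ε ≤ lam := le_trans (le_max_right _ _) hlam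
    rw [div_le_iff₀ hε] at h2
    nlinarith
  have hup' : sInf Sf / lam < V + ε := by
    have h3 : sInf Sf / lam ≤ T Ψ₀ / lam + Vee Ψ₀ := by
      rw [div_le_iff₀ hlampos, add_mul, div_mul_cancel₀ _ hlampos.ne']
      linarith [hup, mul_comm lam (Vee Ψ₀) ▸ hup]
    calc sInf Sf / lam ≤ T Ψ₀ / lam + Vee Ψ₀ := h3
      _ < ε / 2 + (V + ε / 2) := by linarith [hTdiv, hvlt]
      _ = V + ε := by ring
  rw [Real.dist_eq, abs_lt]
  constructor <;> linarith
end

section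
/- At any point (r₁,…,r_N) of the support set ℳ = argmin(V_ee − ∑_i u(r_i)) where the function is differentiable in r₁, the gradient relation ∇u(r₁) = ∇_{r₁}V_ee(r₁,…,r_N) holds. In particular, for the Coulomb interaction and an SCE-type optimizer with maps f₁,…,f_{N−1}, one obtains the force equation ∇u(r) = −∑_{i=1}^{N-1} (r − f_i(r))/|r − f_i(r)|³ wherever u is differentiable and ρ(r) > 0. -/
open MeasureTheory InnerProductSpace

variable {E : Type*} [NormedAddCommGroup E] [InnerProductSpace ℝ E] [CompleteSpace E]

variable {E : Type*} [NormedAddCommGroup E] [InnerProductSpace ℝ E] [CompleteSpace E]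

lemma hasFDerivAt_inv_norm_sub (a x : E) (h : x ≠ a) :
    HasFDerivAt (fun s : E => ‖s - a‖⁻¹)
      ((toDual ℝ E) (-(‖x - a‖ ^ 3)⁻¹ • (x - a))) x := by
  set v := x - a with hv
  have hv0 : v ≠ 0 := sub_ne_zero.mpr h
  have hvn : (0:ℝ) < ‖v‖ := norm_pos_iff.mpr hv0
  have hid : HasFDerivAt (fun s : E => s - a) (ContinuousLinearMap.id ℝ E) x :=
    (hasFDerivAt_id x).sub_const a
  have hinner : HasFDerivAt (fun s : E => (inner ℝ (s - a) (s - a) : ℝ))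
      ((fderivInnerCLM ℝ (v, v)).comp ((ContinuousLinearMap.id ℝ E).prod
        (ContinuousLinearMap.id ℝ E))) x := hid.inner ℝ hid
  have ht0 : (inner ℝ v v : ℝ) = ‖v‖ ^ 2 := real_inner_self_eq_norm_sq v
  have htne : (inner ℝ v v : ℝ) ≠ 0 := by
    rw [ht0]; positivity
  have hsqrt : HasDerivAt (fun t : ℝ => (Real.sqrt t)⁻¹)
      (-(1 / (2 * Real.sqrt (inner ℝ v v : ℝ))) / (Real.sqrt (inner ℝ v v : ℝ)) ^ 2)
      ((inner ℝ v v : ℝ)) := by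
    exact (Real.hasDerivAt_sqrt htne).inv (by rw [ht0, Real.sqrt_sq hvn.le]; exact hvn.ne')
  have hcomp := hsqrt.comp_hasFDerivAt x hinner
  have hfun : (fun s : E => (Real.sqrt (inner ℝ (s - a) (s - a) : ℝ))⁻¹)
      = fun s : E => ‖s - a‖⁻¹ := by
    funext s
    rw [real_inner_self_eq_norm_sq, Real.sqrt_sq (norm_nonneg _)]
  simp only [Function.comp_def] at hcomp
  rw [hfun] at hcomp
  refine hcomp.congr_fderiv ?_
  symm
  ext y
  simp only [ContinuousLinearMap.smul_apply, ContinuousLinearMap.comp_apply,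
    ContinuousLinearMap.prod_apply, ContinuousLinearMap.id_apply, fderivInnerCLM_apply,
    toDual_apply_apply, real_inner_smul_left]
  rw [real_inner_comm y v, ht0, Real.sqrt_sq hvn.le]
  have h3 : ‖v‖ ^ 3 ≠ 0 := by positivity
  field_simp
  rw [smul_eq_mul]
  linear_combination (inner ℝ y v : ℝ) * mul_inv_cancel₀ h3

lemma hasGradientAt_inv_norm_sub (a x : E) (h : x ≠ a) :
    HasGradientAt (fun s : E => ‖s - a‖⁻¹) (-(‖x - a‖ ^ 3)⁻¹ • (x - a)) x :=
  hasGradientAt_iff_hasFDerivAt.mpr (hasFDerivAt_inv_norm_sub a x h)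

lemma key_gradient_rel {M : ℕ} (u : E → ℝ) (W : (Fin (M + 1) → E) → ℝ)
    (p : Fin (M + 1) → E)
    (hmin : ∀ y : Fin (M + 1) → E,
      W p - ∑ i : Fin (M + 1), u (p i) ≤ W y - ∑ i : Fin (M + 1), u (y i))
    (hu : DifferentiableAt ℝ u (p 0))
    (hW : DifferentiableAt ℝ (fun r => W (Function.update p 0 r)) (p 0)) :
    gradient u (p 0) = gradient (fun r => W (Function.update p 0 r)) (p 0) := by
  have hsum : ∀ r : E, ∑ i : Fin (M + 1), u (Function.update p 0 r i)
      = u r + ∑ i ∈ Finset.univ \ {(0 : Fin (M + 1))}, u (p i) := by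
    intro r
    have h1 : (fun i => u (Function.update p 0 r i))
        = Function.update (fun i => u (p i)) 0 (u r) := by
      funext i
      exact Function.apply_update (fun _ x => u x) p 0 r i
    calc ∑ i : Fin (M + 1), u (Function.update p 0 r i)
        = ∑ i : Fin (M + 1), Function.update (fun i => u (p i)) 0 (u r) i := by rw [h1]
      _ = u r + ∑ i ∈ Finset.univ \ {(0 : Fin (M + 1))}, u (p i) :=
          Finset.sum_update_of_mem (Finset.mem_univ _) (fun i => u (p i)) (u r)
  have hG : IsLocalMin (fun r => W (Function.update p 0 r) - u r) (p 0) := by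
    apply Filter.Eventually.of_forall
    intro r
    dsimp only
    rw [Function.update_eq_self]
    have h2 := hmin (Function.update p 0 r)
    rw [hsum r] at h2
    have h3 : ∑ i : Fin (M + 1), u (p i)
        = u (p 0) + ∑ i ∈ Finset.univ \ {(0 : Fin (M + 1))}, u (p i) := by
      have := hsum (p 0)
      rwa [Function.update_eq_self] at this
    linarith
  have hzero : fderiv ℝ (fun r => W (Function.update p 0 r) - u r) (p 0) = 0 :=
    hG.fderiv_eq_zero
  rw [fderiv_fun_sub hW hu] at hzero
  have hfeq : fderiv ℝ u (p 0) = fderiv ℝ (fun r => W (Function.update p 0 r)) (p 0) :=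
    (sub_eq_zero.mp hzero).symm
  show (toDual ℝ E).symm (fderiv ℝ u (p 0)) = (toDual ℝ E).symm _
  rw [hfeq]


/-- The (real-valued) Coulomb interaction `∑_{i<j} 1/‖r_i − r_j‖` on configurations
of `N` points in `ℝ^d`. -/
noncomputable def coulombR (d N : ℕ) (x : Fin N → EuclideanSpace ℝ (Fin d)) : ℝ :=
  ∑ p ∈ Finset.univ.filter (fun p : Fin N × Fin N => p.1 < p.2), ‖x p.1 - x p.2‖⁻¹

/-- **Gradient relation on the support set and the SCE force equation.**
Let `N = M + 1` be the particle number.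
(1) At any point `p` of the set `ℳ = argmin (V_ee − ∑_i u(r_i))` at which `u` and
`r ↦ V_ee(r, p₂, …, p_N)` are differentiable (with respect to the first variable),
the gradient relation `∇u(p₁) = ∇_{r₁}V_ee(p₁,…,p_N)` holds.
(2) In particular, for the Coulomb interaction and an SCE-type optimizer with maps
`f₁,…,f_{N−1}` (here `f i`, `i ≠ 0`, with `f 0 = id`), whose configurations
`(r, f₁(r), …, f_{N−1}(r))` minimize `V_ee^{Coulomb} − ∑_i u(r_i)` whenever `ρ(r) > 0`,
one has the force equation `∇u(r) = −∑_{i=1}^{N−1} (r − f_i(r))/‖r − f_i(r)‖³`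
wherever `u` is differentiable and `ρ(r) > 0`. -/
theorem gradient_relation_and_force_equation
    {d M : ℕ} (u : EuclideanSpace ℝ (Fin d) → ℝ)
    (Vee : (Fin (M + 1) → EuclideanSpace ℝ (Fin d)) → ℝ)
    (ρ : EuclideanSpace ℝ (Fin d) → ℝ)
    (f : Fin (M + 1) → EuclideanSpace ℝ (Fin d) → EuclideanSpace ℝ (Fin d))
    (hf0 : ∀ r, f 0 r = r)
    (hSCE : ∀ r, 0 < ρ r →
      ∀ y : Fin (M + 1) → EuclideanSpace ℝ (Fin d),
        coulombR d (M + 1) (fun i => f i r) - ∑ i : Fin (M + 1), u (f i r)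
          ≤ coulombR d (M + 1) y - ∑ i : Fin (M + 1), u (y i))
    (hdist : ∀ r, 0 < ρ r → ∀ i : Fin (M + 1), i ≠ 0 → f i r ≠ r) :
    (∀ p : Fin (M + 1) → EuclideanSpace ℝ (Fin d),
      (∀ y : Fin (M + 1) → EuclideanSpace ℝ (Fin d),
        Vee p - ∑ i : Fin (M + 1), u (p i) ≤ Vee y - ∑ i : Fin (M + 1), u (y i)) →
      DifferentiableAt ℝ u (p 0) →
      DifferentiableAt ℝ (fun r => Vee (Function.update p 0 r)) (p 0) →
      gradient u (p 0) = gradient (fun r => Vee (Function.update p 0 r)) (p 0)) ∧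
    (∀ r : EuclideanSpace ℝ (Fin d), 0 < ρ r → DifferentiableAt ℝ u r →
      gradient u r
        = -∑ i ∈ Finset.univ.filter (fun i : Fin (M + 1) => i ≠ 0),
            (‖r - f i r‖ ^ 3)⁻¹ • (r - f i r)) := by
  constructor
  · intro p hmin hu hW
    exact key_gradient_rel u Vee p hmin hu hW
  · intro r hρ hu
    set a : Fin (M + 1) → EuclideanSpace ℝ (Fin d) := fun i => f i r with ha
    have ha0 : a 0 = r := hf0 r
    -- split the Coulomb sum
    set s₀ : Finset (Fin (M + 1)) := Finset.univ.filter (fun i : Fin (M + 1) => i ≠ 0) with hs₀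
    have hsplit : ∀ s : EuclideanSpace ℝ (Fin d),
        coulombR d (M + 1) (Function.update a 0 s)
          = (∑ i ∈ s₀, ‖s - a i‖⁻¹)
            + ∑ q ∈ Finset.univ.filter
                (fun q : Fin (M + 1) × Fin (M + 1) => q.1 < q.2 ∧ ¬ q.1 = 0),
              ‖a q.1 - a q.2‖⁻¹ := by
      intro s
      unfold coulombR
      rw [← Finset.sum_filter_add_sum_filter_not
        (Finset.univ.filter (fun q : Fin (M + 1) × Fin (M + 1) => q.1 < q.2))
        (fun q => q.1 = 0)]
      congr 1
      · rw [Finset.filter_filter]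
        refine Finset.sum_nbij' (fun q => q.2) (fun i => ((0 : Fin (M + 1)), i)) ?_ ?_ ?_ ?_ ?_
        · intro q hq
          simp only [Finset.mem_filter, Finset.mem_univ, true_and] at hq
          simp only [hs₀, Finset.mem_filter, Finset.mem_univ, true_and]
          rw [hq.2] at hq
          exact Fin.pos_iff_ne_zero.mp hq.1
        · intro i hi
          simp only [hs₀, Finset.mem_filter, Finset.mem_univ, true_and] at hi
          simp only [Finset.mem_filter, Finset.mem_univ, true_and]
          exact ⟨Fin.pos_iff_ne_zero.mpr hi, trivial⟩

        · intro q hq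
          simp only [Finset.mem_filter, Finset.mem_univ, true_and] at hq
          rw [← hq.2]
        · intro i _; rfl
        · intro q hq
          simp only [Finset.mem_filter, Finset.mem_univ, true_and] at hq
          rw [hq.2, Function.update_self, Function.update_of_ne]
          rw [hq.2] at hq
          exact (Fin.pos_iff_ne_zero.mp hq.1)
      · rw [Finset.filter_filter]
        apply Finset.sum_congr rfl
        intro q hq
        simp only [Finset.mem_filter, Finset.mem_univ, true_and] at hq
        have hq2 : q.2 ≠ 0 := by
          intro h0
          rw [h0] at hq
          exact absurd hq.1 (by simp [Fin.not_lt_zero])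
        rw [Function.update_of_ne hq.2, Function.update_of_ne hq2]
    -- gradient of the split function
    have hGrad : HasGradientAt (fun s => coulombR d (M + 1) (Function.update a 0 s))
        (∑ i ∈ s₀, -(‖r - a i‖ ^ 3)⁻¹ • (r - a i)) r := by
      have hne : ∀ i ∈ s₀, r ≠ a i := by
        intro i hi
        simp only [hs₀, Finset.mem_filter, Finset.mem_univ, true_and] at hi
        exact fun h => hdist r hρ i hi h.symm
      have hF : HasFDerivAt (fun s : EuclideanSpace ℝ (Fin d) => ∑ i ∈ s₀, ‖s - a i‖⁻¹)
          (∑ i ∈ s₀, (toDual ℝ _) (-(‖r - a i‖ ^ 3)⁻¹ • (r - a i))) r :=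
        HasFDerivAt.fun_sum (fun i hi => hasFDerivAt_inv_norm_sub (a i) r (hne i hi))
      have hF2 := hF.add_const (∑ q ∈ Finset.univ.filter
          (fun q : Fin (M + 1) × Fin (M + 1) => q.1 < q.2 ∧ ¬ q.1 = 0), ‖a q.1 - a q.2‖⁻¹)
      rw [show (fun s : EuclideanSpace ℝ (Fin d) => coulombR d (M + 1) (Function.update a 0 s))
        = _ from funext hsplit]
      rw [hasGradientAt_iff_hasFDerivAt, map_sum]
      exact hF2
    have hdiff : DifferentiableAt ℝ
        (fun s => coulombR d (M + 1) (Function.update a 0 s)) r := hGrad.differentiableAt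
    have hmin := hSCE r hρ
    have hkey := key_gradient_rel u (coulombR d (M + 1)) a (by simpa [ha] using hmin)
      (by rwa [ha0]) (by rwa [ha0])
    rw [ha0] at hkey
    rw [hkey, hGrad.gradient]
    rw [← Finset.sum_neg_distrib]
    apply Finset.sum_congr rfl
    intro i hi
    simp [ha, neg_smul]
end

section
/- For the 1D Lorentzian density with N = 2, ρ(r) = 2/(π(1+r²)), the Seidl co-motion function is f(r) = −1/r, characterized by arctan f(r) = arctan r + π/2 (mod π), and it satisfies f(f(r)) = r and f_♯ρ = ρ. -/
open MeasureTheory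

/-- Cumulative distribution of the normalized Lorentzian density `1/(π(1+r²))`:
`G(r) = (1/π) arctan r + 1/2`. -/
noncomputable def lorentzCDF (r : ℝ) : ℝ := (1 / Real.pi) * Real.arctan r + 1 / 2

/-- Generalized inverse: `G⁻¹(y) = inf {r : G(r) > y}`. -/
noncomputable def lorentzCDFInv (y : ℝ) : ℝ := sInf {r : ℝ | y < lorentzCDF r}

/-- Seidl's co-motion function for the 1D Lorentzian density with `N` electrons. -/
noncomputable def seidlMap (N i : ℕ) (r : ℝ) : ℝ :=
  if lorentzCDF r ≤ ((N : ℝ) - i) / N then lorentzCDFInv (lorentzCDF r + i / N)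
  else lorentzCDFInv (lorentzCDF r + i / N - 1)

lemma lorentzCDF_lt_iff {a b : ℝ} : lorentzCDF a < lorentzCDF b ↔ a < b := by
  unfold lorentzCDF
  rw [add_lt_add_iff_right, mul_lt_mul_iff_right₀ (by positivity),
    Real.arctan_strictMono.lt_iff_lt]

lemma lorentzCDFInv_CDF (s : ℝ) : lorentzCDFInv (lorentzCDF s) = s := by
  have : {r : ℝ | lorentzCDF s < lorentzCDF r} = Set.Ioi s := by
    ext r; simp [lorentzCDF_lt_iff]
  rw [lorentzCDFInv, this, csInf_Ioi]

lemma arctan_neg_one_div_of_neg {r : ℝ} (hr : r < 0) :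
    Real.arctan (-(1 / r)) = Real.arctan r + Real.pi / 2 := by
  rw [one_div, Real.arctan_neg, Real.arctan_inv_of_neg hr]
  ring

lemma arctan_neg_one_div_of_pos {r : ℝ} (hr : 0 < r) :
    Real.arctan (-(1 / r)) = Real.arctan r - Real.pi / 2 := by
  rw [one_div, Real.arctan_neg, Real.arctan_inv_of_pos hr]
  ring

/-- The set-measure of the Lorentzian measure as an integral. -/
lemma lorentz_meas (s : Set ℝ) (hs : MeasurableSet s) :
    (volume.withDensity fun r : ℝ => ENNReal.ofReal (2 / (Real.pi * (1 + r ^ 2)))) s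
      = ENNReal.ofReal (∫ x in s, 2 / (Real.pi * (1 + x ^ 2))) := by
  have hfun : (fun x : ℝ => 2 / (Real.pi * (1 + x ^ 2)))
      = fun x : ℝ => (2 / Real.pi) * (1 + x ^ 2)⁻¹ := by
    funext x
    rw [div_mul_eq_div_div, div_eq_mul_inv]
  have hint : MeasureTheory.Integrable (fun x : ℝ => 2 / (Real.pi * (1 + x ^ 2))) := by
    rw [hfun]; exact integrable_inv_one_add_sq.const_mul _
  rw [withDensity_apply _ hs,
    ← MeasureTheory.ofReal_integral_eq_lintegral_ofReal hint.integrableOn]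
  filter_upwards with x
  positivity

lemma lorentz_int_Iic (a : ℝ) :
    ∫ x in Set.Iic a, 2 / (Real.pi * (1 + x ^ 2))
      = (2 / Real.pi) * (Real.arctan a + Real.pi / 2) := by
  have hfun : (fun x : ℝ => 2 / (Real.pi * (1 + x ^ 2)))
      = fun x : ℝ => (2 / Real.pi) * (1 + x ^ 2)⁻¹ := by
    funext x; rw [div_mul_eq_div_div, div_eq_mul_inv]
  rw [hfun, MeasureTheory.integral_const_mul, integral_Iic_inv_one_add_sq]

lemma lorentz_int_Ici (a : ℝ) :
    ∫ x in Set.Ici a, 2 / (Real.pi * (1 + x ^ 2))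
      = (2 / Real.pi) * (Real.pi / 2 - Real.arctan a) := by
  have hfun : (fun x : ℝ => 2 / (Real.pi * (1 + x ^ 2)))
      = fun x : ℝ => (2 / Real.pi) * (1 + x ^ 2)⁻¹ := by
    funext x; rw [div_mul_eq_div_div, div_eq_mul_inv]
  rw [hfun, MeasureTheory.integral_Ici_eq_integral_Ioi, MeasureTheory.integral_const_mul,
    integral_Ioi_inv_one_add_sq]

lemma lorentz_int_Ioc (a b : ℝ) (hab : a ≤ b) :
    ∫ x in Set.Ioc a b, 2 / (Real.pi * (1 + x ^ 2))
      = (2 / Real.pi) * (Real.arctan b - Real.arctan a) := by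
  have hfun : (fun x : ℝ => 2 / (Real.pi * (1 + x ^ 2)))
      = fun x : ℝ => (2 / Real.pi) * (1 / (1 + x ^ 2)) := by
    funext x; rw [div_mul_eq_div_div, div_eq_mul_inv, one_div]
  rw [hfun, ← intervalIntegral.integral_of_le hab, intervalIntegral.integral_const_mul,
    integral_one_div_one_add_sq]

/-- **The Lorentzian co-motion function for `N = 2` is `f(r) = −1/r`.**
For `ρ(r) = 2/(π(1+r²))`, the Seidl co-motion function equals `f(r) = −1/r` (for
`r ≠ 0`), is characterized by `arctan f(r) = arctan r + π/2 (mod π)`, satisfies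
`f(f(r)) = r`, and pushes `ρ` forward to itself: `f_♯ρ = ρ`. -/
theorem lorentzian_two_electron_comotion :
    (∀ r : ℝ, r ≠ 0 → seidlMap 2 1 r = -(1 / r)) ∧
    (∀ r : ℝ, r ≠ 0 → ∃ k : ℤ,
      Real.arctan (-(1 / r)) = Real.arctan r + Real.pi / 2 + k * Real.pi) ∧
    (∀ r : ℝ, r ≠ 0 → -(1 / -(1 / r)) = r) ∧
    (volume.withDensity fun r : ℝ => ENNReal.ofReal (2 / (Real.pi * (1 + r ^ 2)))).map
        (fun r : ℝ => -(1 / r))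
      = volume.withDensity fun r : ℝ => ENNReal.ofReal (2 / (Real.pi * (1 + r ^ 2))) := by
  have hpi := Real.pi_pos
  refine ⟨?_, ?_, ?_, ?_⟩
  · -- seidlMap 2 1 = -(1/r)
    intro r hr
    unfold seidlMap
    rcases lt_or_gt_of_ne hr with h | h
    · have hcond : lorentzCDF r ≤ ((2 : ℕ) - ((1 : ℕ) : ℝ)) / (2 : ℕ) := by
        have : Real.arctan r < 0 := by
          simpa using Real.arctan_strictMono h
        unfold lorentzCDF
        push_cast
        nlinarith [this, one_div_pos.mpr hpi]
      rw [if_pos hcond]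
      have key : lorentzCDF r + ((1 : ℕ) : ℝ) / ((2 : ℕ) : ℝ) = lorentzCDF (-(1 / r)) := by
        unfold lorentzCDF
        rw [arctan_neg_one_div_of_neg h]
        push_cast
        field_simp
        try ring
      rw [key, lorentzCDFInv_CDF]
    · have hcond : ¬ lorentzCDF r ≤ ((2 : ℕ) - ((1 : ℕ) : ℝ)) / (2 : ℕ) := by
        have : 0 < Real.arctan r := by
          simpa using Real.arctan_strictMono h
        unfold lorentzCDF
        push_cast
        rw [not_le]
        nlinarith [this, one_div_pos.mpr hpi]
      rw [if_neg hcond]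
      have key : lorentzCDF r + ((1 : ℕ) : ℝ) / ((2 : ℕ) : ℝ) - 1 = lorentzCDF (-(1 / r)) := by
        unfold lorentzCDF
        rw [arctan_neg_one_div_of_pos h]
        push_cast
        field_simp
        try ring
      rw [key, lorentzCDFInv_CDF]
  · -- arctan relation
    intro r hr
    rcases lt_or_gt_of_ne hr with h | h
    · exact ⟨0, by rw [arctan_neg_one_div_of_neg h]; push_cast; ring⟩
    · exact ⟨-1, by rw [arctan_neg_one_div_of_pos h]; push_cast; ring⟩
  · -- involution
    intro r hr
    field_simp
  · -- pushforward
    have hf : Measurable fun r : ℝ => -(1 / r) := by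
      simp only [one_div]
      exact measurable_inv.neg
    have hμIic : ∀ a : ℝ,
        (volume.withDensity fun r : ℝ =>
          ENNReal.ofReal (2 / (Real.pi * (1 + r ^ 2)))) (Set.Iic a)
        = ENNReal.ofReal ((2 / Real.pi) * (Real.arctan a + Real.pi / 2)) := by
      intro a
      rw [lorentz_meas _ measurableSet_Iic, lorentz_int_Iic]
    have hμfin : IsFiniteMeasure (volume.withDensity fun r : ℝ =>
        ENNReal.ofReal (2 / (Real.pi * (1 + r ^ 2)))) := by
      constructor
      rw [← Set.Iic_union_Ioi (a := (0 : ℝ)), measure_union (Set.Iic_disjoint_Ioi le_rfl)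
        measurableSet_Ioi, hμIic 0]
      have h2 : (volume.withDensity fun r : ℝ =>
          ENNReal.ofReal (2 / (Real.pi * (1 + r ^ 2)))) (Set.Ioi 0) ≤
          (volume.withDensity fun r : ℝ =>
          ENNReal.ofReal (2 / (Real.pi * (1 + r ^ 2)))) (Set.Ici 0) :=
        measure_mono Set.Ioi_subset_Ici_self
      rw [lorentz_meas _ measurableSet_Ici, lorentz_int_Ici] at h2
      exact lt_of_le_of_lt (add_le_add le_rfl h2)
        (ENNReal.add_lt_top.mpr ⟨ENNReal.ofReal_lt_top, ENNReal.ofReal_lt_top⟩)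
    have : IsFiniteMeasure ((volume.withDensity fun r : ℝ =>
        ENNReal.ofReal (2 / (Real.pi * (1 + r ^ 2)))).map fun r : ℝ => -(1 / r)) :=
      Measure.isFiniteMeasure_map _ _
    refine Measure.ext_of_Iic _ _ fun a => ?_
    rw [Measure.map_apply hf measurableSet_Iic, hμIic a]
    rcases lt_trichotomy a 0 with ha | ha | ha
    · -- a < 0 : preimage is Ioc 0 (-(1/a))
      have hpre : (fun r : ℝ => -(1 / r)) ⁻¹' Set.Iic a = Set.Ioc 0 (-(1 / a)) := by
        ext r
        simp only [Set.mem_preimage, Set.mem_Iic, Set.mem_Ioc]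
        constructor
        · intro hra
          have hr0 : 0 < r := by
            by_contra hc
            push_neg at hc
            rcases eq_or_lt_of_le hc with h' | hc'
            · rw [h'] at hra; simp at hra; linarith
            · have : 0 < -(1 / r) := by
                have : 1 / r < 0 := by
                  apply div_neg_of_pos_of_neg one_pos hc'
                linarith
              linarith
          refine ⟨hr0, ?_⟩
          have h1 : -a ≤ 1 / r := by linarith
          have h2 : 0 < -a := by linarith
          have h3 : 1 / (1 / r) ≤ 1 / (-a) := one_div_le_one_div_of_le h2 h1
          rw [one_div_one_div] at h3
          calc r ≤ 1 / (-a) := h3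
            _ = -(1 / a) := by rw [div_neg]
        · rintro ⟨hr0, hra⟩
          have h2 : 0 < -a := by linarith
          have hra' : r ≤ 1 / (-a) := by rw [div_neg]; linarith
          have h3 : 1 / (1 / (-a)) ≤ 1 / r := one_div_le_one_div_of_le hr0 hra'
          rw [one_div_one_div] at h3
          linarith
      rw [hpre, lorentz_meas _ measurableSet_Ioc,
        lorentz_int_Ioc 0 (-(1 / a)) (by have := one_div_neg.mpr ha; linarith), Real.arctan_zero, sub_zero,
        arctan_neg_one_div_of_neg ha]
    · -- a = 0 : preimage is Ici 0
      subst ha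
      have hpre : (fun r : ℝ => -(1 / r)) ⁻¹' Set.Iic 0 = Set.Ici 0 := by
        ext r
        simp only [Set.mem_preimage, Set.mem_Iic, Set.mem_Ici]
        constructor
        · intro hra
          by_contra hc
          push_neg at hc
          have : 1 / r < 0 := div_neg_of_pos_of_neg one_pos hc
          linarith
        · intro hr
          rcases eq_or_lt_of_le hr with h' | hr'
          · rw [← h']; simp
          · have : 0 < 1 / r := by positivity
            linarith
      rw [hpre, lorentz_meas _ measurableSet_Ici, lorentz_int_Ici, Real.arctan_zero,
        sub_zero, zero_add]
    · -- a > 0 : preimage is Iic (-(1/a)) ∪ Ici 0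
      have hb : -(1 / a) < 0 := by
        have : 0 < 1 / a := by positivity
        linarith
      have hpre : (fun r : ℝ => -(1 / r)) ⁻¹' Set.Iic a
          = Set.Iic (-(1 / a)) ∪ Set.Ici 0 := by
        ext r
        simp only [Set.mem_preimage, Set.mem_Iic, Set.mem_union, Set.mem_Ici]
        constructor
        · intro hra
          rcases le_or_gt 0 r with hr | hr
          · exact Or.inr hr
          · left
            have hnr : 0 < -r := by linarith
            have hpos : 0 < 1 / (-r) := by positivity
            have h1 : 1 / (-r) ≤ a := by
              rw [div_neg]; linarith
            have h3 : 1 / a ≤ 1 / (1 / (-r)) := one_div_le_one_div_of_le hpos h1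
            rw [one_div_one_div] at h3
            linarith
        · intro h
          rcases h with h | h
          · have hr : r < 0 := lt_of_le_of_lt h hb
            have hpa : 0 < 1 / a := by positivity
            have h1 : 1 / a ≤ -r := by linarith
            have h3 : 1 / (-r) ≤ 1 / (1 / a) := one_div_le_one_div_of_le hpa h1
            rw [one_div_one_div, div_neg] at h3
            linarith
          · rcases eq_or_lt_of_le h with h' | hr'
            · have hz : -(1 / r) = 0 := by rw [← h']; norm_num
              linarith
            · have : 0 < 1 / r := by positivity
              linarith
      have hdisj : Disjoint (Set.Iic (-(1 / a))) (Set.Ici (0 : ℝ)) := by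
        rw [Set.disjoint_left]
        intro x hx hx'
        simp only [Set.mem_Iic] at hx
        simp only [Set.mem_Ici] at hx'
        linarith
      rw [hpre, measure_union hdisj measurableSet_Ici,
        lorentz_meas _ measurableSet_Iic, lorentz_meas _ measurableSet_Ici,
        lorentz_int_Iic, lorentz_int_Ici, Real.arctan_zero, sub_zero,
        arctan_neg_one_div_of_pos ha]
      have hat : 0 < Real.arctan a := by simpa using Real.arctan_strictMono ha
      rw [← ENNReal.ofReal_add (by nlinarith [div_pos two_pos hpi]) (by positivity)]
      congr 1
      ring
end

section
/- If ρ ∈ L¹(ℝ^d), ρ ≥ 0, ∫ρ = N, and ρ has finite first moment ∫|r|ρ(r)dr < ∞, then for every probability density π ∈ L¹(ℝ^{dN}) with all marginals equal to ρ/N, the negative part of π log π has finite integral; more precisely ∫(π log π)_− ≥ −A_ρ where A_ρ = C(∫e^{−|r|/2}dr)^N + ∫|r|ρ(r)dr depends only on ρ. -/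
open MeasureTheory
open scoped ENNReal

/-!
Pointwise, with `s = ∑ i, ‖x i‖`, split according to whether `π x < exp (-s)`. There
`|π log π| ≤ 2 √π ≤ 2 exp (-s / 2)`, and `exp (-s / 2)` is a product of one-particle factors
whose integral is `(∫ exp (-‖r‖ / 2))^N`. Otherwise `log π ≥ -s`, so `-π log π ≤ π s`, and
since every marginal of `π` is `ρ / N`, the integral of `π s` is at most `∫ ‖r‖ ρ r`.
-/

open Real in
lemma abs_mul_log_le_two_mul_sqrt {z : ℝ} (hz0 : 0 ≤ z) (hz1 : z ≤ 1) :
    |z * log z| ≤ 2 * √z := by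
  rcases hz0.eq_or_lt with rfl | hz
  · simp
  have h := (abs_log_mul_self_rpow_lt z (1 / 2) hz hz1 one_half_pos).le
  rw [← sqrt_eq_rpow, one_div_one_div] at h
  calc |z * log z| = √z * |log z * √z| := by
        rw [abs_mul, abs_mul, abs_of_nonneg (sqrt_nonneg z)]
        nth_rw 1 [← mul_self_sqrt hz0]
        rw [abs_mul, abs_of_nonneg (sqrt_nonneg z)]; ring
    _ ≤ √z * 2 := by gcongr
    _ = 2 * √z := mul_comm _ _

open Real in
lemma neg_min_mul_log_zero_le {p s : ℝ} (hp : 0 ≤ p) (hs : 0 ≤ s) :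
    -min (p * log p) 0 ≤ 2 * exp (-s / 2) + p * s := by
  rw [neg_le, le_min_iff]
  refine ⟨?_, by linarith [exp_pos (-s / 2), mul_nonneg hp hs]⟩
  rcases le_or_gt p (exp (-s)) with hsmall | hlarge
  · have hp1 : p ≤ 1 := hsmall.trans (exp_le_one_iff.2 (by linarith))
    have hsqrt : √p ≤ exp (-s / 2) := by rw [exp_half]; exact Real.sqrt_le_sqrt hsmall
    linarith [neg_abs_le (p * log p), abs_mul_log_le_two_mul_sqrt hp hp1, mul_nonneg hp hs]
  · have hlog : -s < log p := (lt_log_iff_exp_lt (exp_pos _ |>.trans hlarge)).2 hlarge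
    nlinarith [exp_pos (-s / 2)]

open Real in
lemma ofReal_neg_min_mul_log_zero_le {p s : ℝ} (hp : 0 ≤ p) (hs : 0 ≤ s) :
    ENNReal.ofReal (-min (p * log p) 0)
      ≤ 2 * ENNReal.ofReal (exp (-s / 2)) + ENNReal.ofReal p * ENNReal.ofReal s := by
  calc _ ≤ ENNReal.ofReal (2 * exp (-s / 2) + p * s) :=
        ENNReal.ofReal_le_ofReal (neg_min_mul_log_zero_le hp hs)
    _ ≤ _ := ENNReal.ofReal_add_le
    _ = _ := by rw [ENNReal.ofReal_mul zero_le_two, ENNReal.ofReal_mul hp, ENNReal.ofReal_ofNat]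

lemma integrable_exp_neg_mul_norm {E : Type*} [NormedAddCommGroup E] [NormedSpace ℝ E]
    [FiniteDimensional ℝ E] [MeasurableSpace E] [BorelSpace E] (μ : Measure E)
    [μ.IsAddHaarMeasure] {b : ℝ} (hb : 0 < b) :
    Integrable (fun x => Real.exp (-b * ‖x‖)) μ := by
  rcases subsingleton_or_nontrivial E with _ | _
  · exact .of_subsingleton
  rw [integrable_fun_norm_addHaar μ (f := fun y => Real.exp (-b * y))]
  refine (integrableOn_rpow_mul_exp_neg_mul_rpow (s := (Module.finrank ℝ E - 1 : ℕ))
    (neg_one_lt_zero.trans_le (Nat.cast_nonneg _)) one_pos hb).congr_fun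
    (fun y _ => by simp [Real.rpow_natCast, Real.rpow_one]) measurableSet_Ioi

lemma lintegral_ofReal_exp_neg_sum_norm_div_two {ι E : Type*} [Fintype ι] [NormedAddCommGroup E]
    [MeasureSpace E] [SigmaFinite (volume : Measure E)]
    (h : Integrable fun r : E => Real.exp (-‖r‖ / 2)) :
    ∫⁻ x : ι → E, ENNReal.ofReal (Real.exp (-(∑ i, ‖x i‖) / 2))
      = ENNReal.ofReal ((∫ r : E, Real.exp (-‖r‖ / 2)) ^ Fintype.card ι) := by
  have hprod (x : ι → E) : Real.exp (-(∑ i, ‖x i‖) / 2) = ∏ i, Real.exp (-‖x i‖ / 2) := by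
    rw [← Real.exp_sum, ← Finset.sum_neg_distrib, Finset.sum_div]
  have hint : Integrable fun x : ι → E => ∏ i, Real.exp (-‖x i‖ / 2) :=
    Integrable.fintype_prod fun _ => h
  simp_rw [hprod]
  rw [← ofReal_integral_eq_lintegral_ofReal hint (ae_of_all _ fun x => by positivity),
    integral_fintype_prod_volume_eq_pow (fun r : E => Real.exp (-‖r‖ / 2))]

lemma lintegral_sum_comp_eval_of_map_eq {ι α : Type*} [Fintype ι] [MeasurableSpace α]
    {μ : Measure (ι → α)} {ν : Measure α} (hμ : ∀ i, μ.map (fun x => x i) = ν)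
    {f : α → ℝ≥0∞} (hf : Measurable f) :
    ∫⁻ x, ∑ i, f (x i) ∂μ = Fintype.card ι * ∫⁻ r, f r ∂ν := by
  rw [lintegral_finsetSum (f := fun i (x : ι → α) => f (x i)) _ fun i _ => by fun_prop]
  have hcoord (i : ι) : ∫⁻ x, f (x i) ∂μ = ∫⁻ r, f r ∂ν := by
    rw [← hμ i, lintegral_map hf (measurable_pi_apply i)]
  simp only [hcoord, Finset.sum_const, Finset.card_univ, nsmul_eq_mul]

lemma natCast_mul_lintegral_ofReal_div_le {α : Type*} [MeasurableSpace α] (μ : Measure α)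
    (n : ℕ) (f : α → ℝ) :
    n * ∫⁻ x, ENNReal.ofReal (f x / n) ∂μ ≤ ∫⁻ x, ENNReal.ofReal (f x) ∂μ := by
  rcases n.eq_zero_or_pos with rfl | hn
  · simp
  simp_rw [ENNReal.ofReal_div_of_pos (Nat.cast_pos.2 hn), ENNReal.ofReal_natCast, div_eq_mul_inv]
  rw [lintegral_mul_const' _ _ (by simp [hn.ne']), ← div_eq_mul_inv]
  exact ENNReal.mul_div_le

lemma lintegral_ofReal_mul_sum_norm_le {ι E : Type*} [Fintype ι] [NormedAddCommGroup E]
    [MeasureSpace E] [OpensMeasurableSpace E] {π : (ι → E) → ℝ} (hπ : Measurable π)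
    {ρ : E → ℝ} (hρ : Measurable ρ) (hρ0 : ∀ r, 0 ≤ ρ r)
    (hmom : Integrable fun r => ‖r‖ * ρ r)
    (hmarg : ∀ i, (volume.withDensity fun x => ENNReal.ofReal (π x)).map (fun x => x i)
      = volume.withDensity fun r => ENNReal.ofReal (ρ r / Fintype.card ι)) :
    ∫⁻ x, ENNReal.ofReal (π x) * ENNReal.ofReal (∑ i, ‖x i‖)
      ≤ ENNReal.ofReal (∫ r, ‖r‖ * ρ r) := by
  have hnorm : Measurable fun r : E => ENNReal.ofReal ‖r‖ := measurable_norm.ennreal_ofReal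
  calc ∫⁻ x, ENNReal.ofReal (π x) * ENNReal.ofReal (∑ i, ‖x i‖)
      = ∫⁻ x, ∑ i, ENNReal.ofReal ‖x i‖ ∂volume.withDensity fun x => ENNReal.ofReal (π x) := by
        rw [lintegral_withDensity_eq_lintegral_mul _ hπ.ennreal_ofReal (by fun_prop)]
        simp_rw [Pi.mul_apply, ENNReal.ofReal_sum_of_nonneg fun i _ => norm_nonneg _]
    _ = Fintype.card ι * ∫⁻ r, ENNReal.ofReal (‖r‖ * ρ r / Fintype.card ι) := by
        rw [lintegral_sum_comp_eval_of_map_eq hmarg hnorm,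
          lintegral_withDensity_eq_lintegral_mul _ (hρ.div_const _).ennreal_ofReal hnorm]
        simp_rw [Pi.mul_apply, ← ENNReal.ofReal_mul' (norm_nonneg _), mul_div_assoc, mul_comm]
    _ ≤ ∫⁻ r, ENNReal.ofReal (‖r‖ * ρ r) := natCast_mul_lintegral_ofReal_div_le _ _ _
    _ = ENNReal.ofReal (∫ r, ‖r‖ * ρ r) :=
        (ofReal_integral_eq_lintegral_ofReal hmom
          (ae_of_all _ fun r => mul_nonneg (norm_nonneg _) (hρ0 r))).symm

theorem entropy_negative_part_bound_general
    {d N : ℕ} (ρ : EuclideanSpace ℝ (Fin d) → ℝ)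
    (hρm : Measurable ρ) (hρ0 : ∀ r, 0 ≤ ρ r)
    (hmom : Integrable fun r : EuclideanSpace ℝ (Fin d) => ‖r‖ * ρ r) :
    ∃ C : ℝ, 0 ≤ C ∧ (∀ z ∈ Set.Icc (0 : ℝ) 1, |z * Real.log z| ≤ C * Real.sqrt z) ∧
      ∀ π : (Fin N → EuclideanSpace ℝ (Fin d)) → ℝ,
        Measurable π → (∀ x, 0 ≤ π x) → Integrable π →
        IsProbabilityMeasure (volume.withDensity fun x => ENNReal.ofReal (π x)) →
        (∀ i : Fin N, (volume.withDensity fun x => ENNReal.ofReal (π x)).map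
            (fun x => x i) = volume.withDensity fun r => ENNReal.ofReal (ρ r / N)) →
        ∫⁻ x, ENNReal.ofReal (-min (π x * Real.log (π x)) 0)
          ≤ ENNReal.ofReal
              (C * (∫ r : EuclideanSpace ℝ (Fin d), Real.exp (-‖r‖ / 2)) ^ N
                + ∫ r : EuclideanSpace ℝ (Fin d), ‖r‖ * ρ r) := by
  refine ⟨2, zero_le_two, fun z hz => abs_mul_log_le_two_mul_sqrt hz.1 hz.2,
    fun π hπm hπ0 _ _ hmarg => ?_⟩
  have hexp : Integrable fun r : EuclideanSpace ℝ (Fin d) => Real.exp (-‖r‖ / 2) :=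
    (integrable_exp_neg_mul_norm volume one_half_pos).congr (ae_of_all _ fun r => by ring_nf)
  calc _ ≤ ∫⁻ x : Fin N → EuclideanSpace ℝ (Fin d),
          2 * ENNReal.ofReal (Real.exp (-(∑ i, ‖x i‖) / 2))
            + ENNReal.ofReal (π x) * ENNReal.ofReal (∑ i, ‖x i‖) :=
        lintegral_mono fun x => ofReal_neg_min_mul_log_zero_le (hπ0 x) (by positivity)
    _ = 2 * (∫⁻ x : Fin N → EuclideanSpace ℝ (Fin d),
            ENNReal.ofReal (Real.exp (-(∑ i, ‖x i‖) / 2)))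
          + ∫⁻ x, ENNReal.ofReal (π x) * ENNReal.ofReal (∑ i, ‖x i‖) := by
        rw [lintegral_add_left (by fun_prop), lintegral_const_mul _ (by fun_prop)]
    _ ≤ 2 * ENNReal.ofReal ((∫ r : EuclideanSpace ℝ (Fin d), Real.exp (-‖r‖ / 2)) ^ N)
          + ENNReal.ofReal (∫ r, ‖r‖ * ρ r) := by
        rw [lintegral_ofReal_exp_neg_sum_norm_div_two hexp, Fintype.card_fin]
        gcongr
        exact lintegral_ofReal_mul_sum_norm_le hπm hρm hρ0 hmom (by simpa using hmarg)
    _ = _ := by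
        rw [ENNReal.ofReal_add (by positivity)
            (integral_nonneg fun r => mul_nonneg (norm_nonneg r) (hρ0 r)),
          ENNReal.ofReal_mul zero_le_two, ENNReal.ofReal_ofNat]

/-- **Well-definedness of the entropy: finite-first-moment bound on the negative part.**
If `ρ ∈ L¹(ℝ^d)`, `ρ ≥ 0`, `∫ρ = N`, and `ρ` has finite first moment, then there is a
constant `A_ρ = C(∫e^{−|r|/2}dr)^N + ∫|r|ρ(r)dr` (with `C` the universal constant in
`|z log z| ≤ C√z` on `[0,1]`), depending only on `ρ`, such that for every probability
density `π ∈ L¹(ℝ^{dN})` with all marginals equal to `ρ/N`, the negative part of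
`π log π` has integral bounded: `∫(π log π)_− ≥ −A_ρ`. -/
theorem entropy_negative_part_bound
    {d N : ℕ} (ρ : EuclideanSpace ℝ (Fin d) → ℝ)
    (hρm : Measurable ρ) (hρ0 : ∀ r, 0 ≤ ρ r) (hρint : Integrable ρ)
    (hρN : ∫ r, ρ r = N)
    (hmom : Integrable fun r : EuclideanSpace ℝ (Fin d) => ‖r‖ * ρ r) :
    ∃ C : ℝ, 0 ≤ C ∧ (∀ z ∈ Set.Icc (0 : ℝ) 1, |z * Real.log z| ≤ C * Real.sqrt z) ∧
      ∀ π : (Fin N → EuclideanSpace ℝ (Fin d)) → ℝ,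
        Measurable π → (∀ x, 0 ≤ π x) → Integrable π →
        IsProbabilityMeasure (volume.withDensity fun x => ENNReal.ofReal (π x)) →
        (∀ i : Fin N, (volume.withDensity fun x => ENNReal.ofReal (π x)).map
            (fun x => x i) = volume.withDensity fun r => ENNReal.ofReal (ρ r / N)) →
        ∫⁻ x, ENNReal.ofReal (-min (π x * Real.log (π x)) 0)
          ≤ ENNReal.ofReal
              (C * (∫ r : EuclideanSpace ℝ (Fin d), Real.exp (-‖r‖ / 2)) ^ N
                + ∫ r : EuclideanSpace ℝ (Fin d), ‖r‖ * ρ r) :=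
  entropy_negative_part_bound_general ρ hρm hρ0 hmom
end
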